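/- Let u_T : ℝⁿ → ℝ be Lipschitz. If u_T is semiconcave with linear modulus and constant 1/(T·λₙ(A)), then I_T(u_T) is nonempty. -/

import Mathlib

open scoped RealInnerProductSpace
open Filter

noncomputable section

/-- `n`-dimensional Euclidean space. -/
abbrev Euc (n : ℕ) := EuclideanSpace ℝ (Fin n)

/-- A real-valued function on `ℝⁿ` is Lipschitz (with some constant). -/
def IsLip {n : ℕ} (f : Euc n → ℝ) : Prop := ∃ K : NNReal, LipschitzWith K f

/-- The quadratic form `q ↦ ⟨M q, q⟩` associated to a matrix `M`. -/
def quadA {n : ℕ} (M : Matrix (Fin n) (Fin n) ℝ) (q : Euc n) : ℝ :=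
  ⟪(Matrix.toEuclideanLin M) q, q⟫

/-- The forward Hopf–Lax operator for the quadratic Hamiltonian `H(p) = ⟨A p, p⟩/2`:
`(S_T^+ g)(x) = inf_y [g(y) + ⟨A⁻¹(x-y), x-y⟩/(2T)]`. -/
def SplusQ {n : ℕ} (T : ℝ) (A : Matrix (Fin n) (Fin n) ℝ) (g : Euc n → ℝ) (x : Euc n) : ℝ :=
  ⨅ y : Euc n, (g y + quadA A⁻¹ (x - y) / (2 * T))

/-- The backward operator for the quadratic Hamiltonian:
`(S_T^- g)(x) = sup_y [g(y) - ⟨A⁻¹(y-x), y-x⟩/(2T)]`. -/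
def SminusQ {n : ℕ} (T : ℝ) (A : Matrix (Fin n) (Fin n) ℝ) (g : Euc n → ℝ) (x : Euc n) : ℝ :=
  ⨆ y : Euc n, (g y - quadA A⁻¹ (y - x) / (2 * T))

/-- `f` is semiconcave with linear modulus and constant `C`:
`f(x+h) + f(x-h) - 2 f(x) ≤ C ‖h‖²` for all `x, h`. -/
def Semiconcave {n : ℕ} (f : Euc n → ℝ) (C : ℝ) : Prop :=
  ∀ x h : Euc n, f (x + h) + f (x - h) - 2 * f x ≤ C * ‖h‖ ^ 2

/-- The smallest eigenvalue of `A`, characterized as `inf_{‖p‖=1} ⟨A p, p⟩`. -/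
def lamMin {n : ℕ} (A : Matrix (Fin n) (Fin n) ℝ) : ℝ :=
  ⨅ p : {p : Euc n // ‖p‖ = 1}, quadA A p.1

/-- The largest eigenvalue of `A`, characterized as `sup_{‖p‖=1} ⟨A p, p⟩`. -/
def lamMax {n : ℕ} (A : Matrix (Fin n) (Fin n) ℝ) : ℝ :=
  ⨆ p : {p : Euc n // ‖p‖ = 1}, quadA A p.1

/-!
Semiconcavity with constant `C = 1/(T λₙ(A))` makes `C/2 ‖z‖² - u_T z` convex, so at every `x`
the function `u_T` lies below a paraboloid `u_T x + ⟪q, z - x⟫ + C/2 ‖z - x‖²`, and since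
`C/2 ‖w‖² ≤ ⟨A⁻¹ w, w⟩/(2T)` it also lies below the Hopf–Lax kernel centred at
`y = x - T A q`. Hence the backward solution `u₀ = S_T^- u_T` is finite and Lipschitz, and the
kernel at `y` touches `u_T` from above at `x`, which is exactly what `S_T^+ u₀ = u_T` needs.
-/

open Set

section Convexity

variable {E : Type*} [NormedAddCommGroup E] [NormedSpace ℝ E]

/-- At a maximiser `r₀`, the symmetric step to the nearer endpoint stays in `[0, 1]`. -/
lemma nonpos_of_midpoint_convex {g : ℝ → ℝ} (hg : Continuous g) (h0 : g 0 = 0) (h1 : g 1 = 0)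
    (hmid : ∀ r h, 2 * g r ≤ g (r + h) + g (r - h)) {r : ℝ} (hr : r ∈ Icc (0 : ℝ) 1) :
    g r ≤ 0 := by
  obtain ⟨r₀, ⟨hr₀0, hr₀1⟩, hmax⟩ :=
    isCompact_Icc.exists_isMaxOn (nonempty_Icc.2 zero_le_one) hg.continuousOn
  rw [isMaxOn_iff] at hmax
  refine (hmax r hr).trans ?_
  rcases le_total r₀ (1 - r₀) with hle | hle
  · have hstep := hmid r₀ r₀
    rw [sub_self, h0] at hstep
    linarith [hmax _ (show r₀ + r₀ ∈ Icc (0 : ℝ) 1 from ⟨by linarith, by linarith⟩)]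
  · have hstep := hmid r₀ (1 - r₀)
    rw [add_sub_cancel, h1] at hstep
    linarith [hmax _ (show r₀ - (1 - r₀) ∈ Icc (0 : ℝ) 1 from ⟨by linarith, by linarith⟩)]

lemma convexOn_univ_of_midpoint {f : E → ℝ} (hf : Continuous f)
    (hmid : ∀ x h, 2 * f x ≤ f (x + h) + f (x - h)) : ConvexOn ℝ univ f := by
  refine ⟨convex_univ, fun a _ b _ s t _ ht hst => ?_⟩
  set g : ℝ → ℝ := fun r => f (a + r • (b - a)) - (f a + r * (f b - f a)) with hg
  have hgc : Continuous g := by fun_prop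
  have hgmid : ∀ r h, 2 * g r ≤ g (r + h) + g (r - h) := by
    intro r h
    have hstep := hmid (a + r • (b - a)) (h • (b - a))
    rw [show a + r • (b - a) + h • (b - a) = a + (r + h) • (b - a) by module,
      show a + r • (b - a) - h • (b - a) = a + (r - h) • (b - a) by module] at hstep
    simp only [hg]
    linarith
  have hgt := nonpos_of_midpoint_convex hgc (by simp [hg]) (by simp [hg]) hgmid
    ⟨ht, by linarith⟩
  obtain rfl : s = 1 - t := by linarith
  rw [show (1 - t) • a + t • b = a + t • (b - a) by module, smul_eq_mul, smul_eq_mul]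
  simp only [hg] at hgt
  linarith

/-- Hahn–Banach separation of `(x, f x)` from the open strict epigraph. -/
lemma ConvexOn.exists_subgradient {f : E → ℝ} (hconv : ConvexOn ℝ univ f) (hf : Continuous f)
    (x : E) : ∃ ℓ : StrongDual ℝ E, ∀ z, f x + ℓ (z - x) ≤ f z := by
  set S : Set (E × ℝ) := {p | p.1 ∈ univ ∧ f p.1 < p.2}
  have hS : IsOpen S := by
    simp only [S, mem_univ, true_and]
    exact isOpen_lt (by fun_prop) continuous_snd
  obtain ⟨φ, hφ⟩ := geometric_hahn_banach_open_point hconv.convex_strict_epigraph hS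
    (x := (x, f x)) (by simp)
  set c := φ (0, 1)
  have hsplit : ∀ z t, φ (z, t) = φ (z, 0) + t * c := by
    intro z t
    rw [← smul_eq_mul, ← map_smul, ← map_add, Prod.smul_mk, Prod.mk_add_mk]
    simp
  have hsep : ∀ z ε, 0 < ε → φ (z, 0) + (f z + ε) * c < φ (x, 0) + f x * c := by
    intro z ε hε
    rw [← hsplit, ← hsplit]
    exact hφ _ ⟨mem_univ _, by simpa using hε⟩
  have hc : c < 0 := by linarith [hsep x 1 one_pos]
  refine ⟨(-c)⁻¹ • φ.comp (.inl ℝ E ℝ), fun z => ?_⟩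
  have hsupport : φ (z, 0) + f z * c ≤ φ (x, 0) + f x * c := by
    refine le_of_forall_pos_lt_add fun ε hε => ?_
    have hε' := hsep z (ε / -c) (div_pos hε (neg_pos.2 hc))
    rw [add_mul, div_mul_eq_mul_div, div_neg, mul_div_cancel_right₀ _ hc.ne] at hε'
    linarith
  have hℓ : φ (z - x, 0) = φ (z, 0) - φ (x, 0) := by
    rw [← map_sub, Prod.mk_sub_mk, sub_zero]
  rw [smul_apply, ContinuousLinearMap.comp_apply,
    ContinuousLinearMap.inl_apply, hℓ, smul_eq_mul, ← le_sub_iff_add_le',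
    inv_mul_le_iff₀ (neg_pos.2 hc)]
  linarith

end Convexity

lemma exists_quadratic_supergradient {F : Type*} [NormedAddCommGroup F] [InnerProductSpace ℝ F]
    [CompleteSpace F] {u : F → ℝ} {C : ℝ} (hu : Continuous u)
    (hsc : ∀ x h, u (x + h) + u (x - h) - 2 * u x ≤ C * ‖h‖ ^ 2) (x : F) :
    ∃ q : F, ∀ z, u z ≤ u x + ⟪q, z - x⟫ + C / 2 * ‖z - x‖ ^ 2 := by
  set φ : F → ℝ := fun z => C / 2 * ‖z‖ ^ 2 - u z with hφ
  have hconv : ConvexOn ℝ univ φ := by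
    refine convexOn_univ_of_midpoint (by fun_prop) fun y h => ?_
    have := parallelogram_law_with_norm ℝ y h
    simp only [hφ]
    linear_combination hsc y h - C / 2 * this
  obtain ⟨ℓ, hℓ⟩ := hconv.exists_subgradient (by fun_prop) x
  refine ⟨C • x - (InnerProductSpace.toDual ℝ F).symm ℓ, fun z => ?_⟩
  have hexpand : ‖z‖ ^ 2 = ‖x‖ ^ 2 + 2 * ⟪x, z - x⟫ + ‖z - x‖ ^ 2 := by
    simpa using norm_add_sq_real x (z - x)
  have := hℓ z
  rw [inner_sub_left, real_inner_smul_left, InnerProductSpace.toDual_symm_apply]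
  simp only [hφ] at this
  linear_combination this + C / 2 * hexpand

section SupConvolution

variable {E : Type*} {g k : E → ℝ}

lemma iInf_iSup_sub_comp_sub_add_eq [AddGroup E]
    (hbdd : ∀ y, BddAbove (range fun z => g z - k (z - y)))
    (htouch : ∀ x, ∃ y, ∀ z, g z - k (z - y) ≤ g x - k (x - y)) (x : E) :
    ⨅ y, ((⨆ z, g z - k (z - y)) + k (x - y)) = g x := by
  have hlower : ∀ y, g x ≤ (⨆ z, g z - k (z - y)) + k (x - y) := fun y => by
    linarith [le_ciSup (hbdd y) x]
  obtain ⟨y, hy⟩ := htouch x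
  refine le_antisymm ((ciInf_le ⟨g x, forall_mem_range.2 hlower⟩ y).trans ?_) (le_ciInf hlower)
  linarith [ciSup_le hy]

variable [SeminormedAddCommGroup E] {K : NNReal}

lemma LipschitzWith.sub_comp_sub_le (hg : LipschitzWith K g) (k : E → ℝ) (a b z : E) :
    g z - k (z - a) ≤ g (z - a + b) - k (z - a + b - b) + K * dist a b := by
  have := hg.le_add_mul z (z - a + b)
  rw [dist_eq_norm, show z - (z - a + b) = a - b by abel, ← dist_eq_norm] at this
  rw [add_sub_cancel_right]
  linarith

lemma LipschitzWith.bddAbove_range_sub_comp_sub (hg : LipschitzWith K g) {b : E}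
    (hb : BddAbove (range fun z => g z - k (z - b))) (a : E) :
    BddAbove (range fun z => g z - k (z - a)) := by
  obtain ⟨M, hM⟩ := hb
  refine ⟨M + K * dist a b, forall_mem_range.2 fun z => (hg.sub_comp_sub_le k a b z).trans ?_⟩
  gcongr
  exact hM ⟨_, rfl⟩

lemma LipschitzWith.iSup_sub_comp_sub (hg : LipschitzWith K g)
    (hbdd : ∀ y, BddAbove (range fun z => g z - k (z - y))) :
    LipschitzWith K fun y => ⨆ z, g z - k (z - y) :=
  .of_le_add_mul K fun a b => ciSup_le fun z =>
    (hg.sub_comp_sub_le k a b z).trans (by gcongr; exact le_ciSup (hbdd b) _)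

end SupConvolution

section QuadraticForm

variable {n : ℕ} {M : Matrix (Fin n) (Fin n) ℝ}

lemma quadA_nonneg (hM : M.PosSemidef) (v : Euc n) : 0 ≤ quadA M v := by
  simpa [quadA] using (Matrix.isPositive_toEuclideanLin_iff.2 hM).re_inner_nonneg_left v

lemma quadA_smul (c : ℝ) (v : Euc n) : quadA M (c • v) = c ^ 2 * quadA M v := by
  simp only [quadA, map_smul, real_inner_smul_left, real_inner_smul_right]
  ring

lemma quadA_add (hM : M.IsHermitian) (u v : Euc n) :
    quadA M (u + v) = quadA M u + 2 * ⟪u, M.toEuclideanLin v⟫ + quadA M v := by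
  have hsymm := Matrix.isSymmetric_toEuclideanLin_iff.2 hM
  simp only [quadA, map_add, inner_add_left, inner_add_right, hsymm u v]
  rw [real_inner_comm (M.toEuclideanLin v) u]
  ring

lemma toEuclideanLin_inv_apply_toEuclideanLin (hM : IsUnit M.det) (v : Euc n) :
    M⁻¹.toEuclideanLin (M.toEuclideanLin v) = v := by
  rw [← LinearMap.comp_apply, Matrix.toEuclideanLin, ← Matrix.toLpLin_mul_same,
    Matrix.nonsing_inv_mul M hM, Matrix.toLpLin_one, LinearMap.id_apply]

lemma quadA_inv_toEuclideanLin (hM : IsUnit M.det) (v : Euc n) :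
    quadA M⁻¹ (M.toEuclideanLin v) = quadA M v := by
  rw [quadA, toEuclideanLin_inv_apply_toEuclideanLin hM, real_inner_comm, quadA]

lemma bddAbove_range_quadA_sphere (M : Matrix (Fin n) (Fin n) ℝ) :
    BddAbove (range fun p : {p : Euc n // ‖p‖ = 1} => quadA M p.1) := by
  set f := LinearMap.toContinuousLinearMap M.toEuclideanLin
  refine ⟨‖f‖, forall_mem_range.2 fun p => ?_⟩
  calc quadA M p.1 ≤ ‖f p.1‖ * ‖p.1‖ := real_inner_le_norm _ _
    _ ≤ ‖f‖ * ‖p.1‖ * ‖p.1‖ := by gcongr; exact f.le_opNorm p.1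
    _ = ‖f‖ := by rw [p.2, mul_one, mul_one]

lemma quadA_le_lamMax_mul_norm_sq (M : Matrix (Fin n) (Fin n) ℝ) (v : Euc n) :
    quadA M v ≤ lamMax M * ‖v‖ ^ 2 := by
  rcases eq_or_ne v 0 with rfl | hv
  · simp [quadA]
  have hnorm : ‖v‖ ≠ 0 := norm_ne_zero_iff.2 hv
  have hunit : ‖‖v‖⁻¹ • v‖ = 1 := by
    rw [norm_smul, norm_inv, norm_norm, inv_mul_cancel₀ hnorm]
  have hle := le_ciSup (bddAbove_range_quadA_sphere M) ⟨_, hunit⟩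
  rw [quadA_smul, inv_pow] at hle
  rwa [inv_mul_le_iff₀ (by positivity), mul_comm] at hle

/-- Expanding `0 ≤ ⟨A⁻¹ (w - s A w), w - s A w⟩` with `s = λₙ(A)⁻¹` (the junk value
`0⁻¹ = 0` makes the degenerate case `λₙ(A) = 0` harmless). -/
lemma norm_sq_div_lamMax_le_quadA_inv {A : Matrix (Fin n) (Fin n) ℝ} (hA : A.PosDef)
    (w : Euc n) : ‖w‖ ^ 2 / lamMax A ≤ quadA A⁻¹ w := by
  set s := (lamMax A)⁻¹
  have hdet := A.isUnit_iff_isUnit_det.1 hA.isUnit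
  have hexpand : quadA A⁻¹ (w + (-s) • A.toEuclideanLin w)
      = quadA A⁻¹ w - 2 * s * ‖w‖ ^ 2 + s ^ 2 * quadA A w := by
    rw [quadA_add hA.1.inv, map_smul, toEuclideanLin_inv_apply_toEuclideanLin hdet,
      real_inner_smul_right, real_inner_self_eq_norm_sq, quadA_smul,
      quadA_inv_toEuclideanLin hdet]
    ring
  have hs : s ^ 2 * lamMax A = s := by
    rcases eq_or_ne (lamMax A) 0 with h | h
    · simp [s, h]
    · rw [sq, mul_assoc, inv_mul_cancel₀ h, mul_one]
  have hnonneg := quadA_nonneg hA.inv.posSemidef (w + (-s) • A.toEuclideanLin w)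
  have hmax := mul_le_mul_of_nonneg_left (quadA_le_lamMax_mul_norm_sq A w) (sq_nonneg s)
  rw [div_eq_inv_mul]
  nlinarith

lemma exists_forall_sub_quadA_inv_le {A : Matrix (Fin n) (Fin n) ℝ} (hA : A.IsHermitian)
    (hdet : IsUnit A.det) {T : ℝ} (hT : T ≠ 0) {g : Euc n → ℝ} {x q : Euc n}
    (hq : ∀ z, g z ≤ g x + ⟪q, z - x⟫ + quadA A⁻¹ (z - x) / (2 * T)) :
    ∃ y, ∀ z, g z - quadA A⁻¹ (z - y) / (2 * T) ≤ g x - quadA A⁻¹ (x - y) / (2 * T) := by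
  refine ⟨x - T • A.toEuclideanLin q, fun z => ?_⟩
  have hshift : z - (x - T • A.toEuclideanLin q) = (z - x) + T • A.toEuclideanLin q := by abel
  rw [hshift, sub_sub_cancel, quadA_add hA.inv, map_smul,
    toEuclideanLin_inv_apply_toEuclideanLin hdet, real_inner_smul_right, real_inner_comm, add_div,
    add_div, show 2 * (T * ⟪q, z - x⟫) / (2 * T) = ⟪q, z - x⟫ by field_simp]
  linarith [hq z]

end QuadraticForm

theorem semiconcave_implies_reachable_general
    {n : ℕ} (T : ℝ) (hT : 0 < T)
    (A : Matrix (Fin n) (Fin n) ℝ) (hA : A.PosDef)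
    (uT : Euc n → ℝ) (huT : IsLip uT)
    (hsc : Semiconcave uT (1 / (T * lamMax A))) :
    ∃ u0 : Euc n → ℝ, IsLip u0 ∧ SplusQ T A u0 = uT := by
  obtain ⟨K, hK⟩ := huT
  set k : Euc n → ℝ := fun w => quadA A⁻¹ w / (2 * T)
  have hkernel (w : Euc n) : 1 / (T * lamMax A) / 2 * ‖w‖ ^ 2 ≤ k w :=
    calc _ = ‖w‖ ^ 2 / lamMax A / (2 * T) := by ring
      _ ≤ k w := div_le_div_of_nonneg_right (norm_sq_div_lamMax_le_quadA_inv hA w) (by positivity)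
  have htouch (x : Euc n) : ∃ y, ∀ z, uT z - k (z - y) ≤ uT x - k (x - y) := by
    obtain ⟨q, hq⟩ := exists_quadratic_supergradient hK.continuous hsc x
    exact exists_forall_sub_quadA_inv_le hA.1 (A.isUnit_iff_isUnit_det.1 hA.isUnit) hT.ne'
      fun z => (hq z).trans ((add_le_add_iff_left _).2 (hkernel (z - x)))
  have hbdd (y : Euc n) : BddAbove (range fun z => uT z - k (z - y)) := by
    obtain ⟨y₀, hy₀⟩ := htouch 0
    exact hK.bddAbove_range_sub_comp_sub ⟨_, forall_mem_range.2 hy₀⟩ y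
  exact ⟨SminusQ T A uT, ⟨K, hK.iSup_sub_comp_sub (k := k) hbdd⟩,
    funext (iInf_iSup_sub_comp_sub_add_eq (k := k) hbdd htouch)⟩

/-- If `u_T` is semiconcave with linear modulus and constant
`1/(T·λₙ(A))`, then `I_T(u_T)` is nonempty. -/
theorem semiconcave_implies_reachable
    {n : ℕ} (hn : 0 < n) (T : ℝ) (hT : 0 < T)
    (A : Matrix (Fin n) (Fin n) ℝ) (hA : A.PosDef)
    (uT : Euc n → ℝ) (huT : IsLip uT)
    (hsc : Semiconcave uT (1 / (T * lamMax A))) :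
    ∃ u0 : Euc n → ℝ, IsLip u0 ∧ SplusQ T A u0 = uT :=
  semiconcave_implies_reachable_general T hT A hA uT huT hsc
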